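/- C is mp if and only if every minimal prime of C is w-pure. -/

import Mathlib

open CompleteLattice

/-- A complete lattice equipped with a commutator operation, axiomatizing the congruence
lattice of an algebra in a semidegenerate congruence-modular variety whose compact
congruences are closed under the commutator. -/
class CommutatorLattice (C : Type*) [CompleteLattice C] where
  comm : C → C → C
  comm_comm : ∀ a b : C, comm a b = comm b a
  comm_sSup : ∀ (s : Set C) (b : C), comm (sSup s) b = ⨆ a ∈ s, comm a b
  comm_le_inf : ∀ a b : C, comm a b ≤ a ⊓ b
  comm_top : ∀ a : C, comm a ⊤ = a
  compactlyGenerated : ∀ x : C,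
    ∃ s : Set C, (∀ a ∈ s, IsCompactElement a) ∧ sSup s = x
  top_isCompact : IsCompactElement (⊤ : C)
  comm_isCompact : ∀ a b : C, IsCompactElement a → IsCompactElement b →
    IsCompactElement (comm a b)

namespace CommutatorLattice

variable {C : Type*} [CompleteLattice C] [CommutatorLattice C]

/-- The residuation `a → b := ⨆ {c | [a,c] ≤ b}`. -/
def resid (a b : C) : C := sSup {c : C | comm a c ≤ b}

/-- The annihilator `a⊥ := a → ⊥`. -/
def ann (a : C) : C := resid a ⊥

/-- Iterated commutator: `cpow a n = [a,a]^n`, with the convention `[a,a]^0 = a`.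
Note that `[a,b]^n` for `n ≥ 1` equals `cpow (comm a b) (n-1)`. -/
def cpow (a : C) : ℕ → C
  | 0 => a
  | n + 1 => comm (cpow a n) (cpow a n)

/-- Prime elements: `p ≠ ⊤` and `[a,b] ≤ p` implies `a ≤ p` or `b ≤ p`. -/
def IsPrime (p : C) : Prop := p ≠ ⊤ ∧ ∀ a b : C, comm a b ≤ p → a ≤ p ∨ b ≤ p

/-- The radical `ρ(a) := ⨅ {p prime | a ≤ p}`. -/
def radical (a : C) : C := sInf {p : C | IsPrime p ∧ a ≤ p}

variable (C) in
/-- `C` is semiprime if `ρ(⊥) = ⊥`. -/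
def Semiprime : Prop := radical (⊥ : C) = ⊥

variable (C) in
/-- Condition (⋆): for all compact `a`, `b` and all `n ≥ 1` there is `m ≥ 0` with
`[[a,a]^m, [b,b]^m] ≤ [a,b]^n`.  Here `cpow (comm a b) n = [a,b]^(n+1)`, so `n : ℕ`
ranges exactly over the exponents `≥ 1` of the paper. -/
def Star : Prop := ∀ a b : C, IsCompactElement a → IsCompactElement b →
  ∀ n : ℕ, ∃ m : ℕ, comm (cpow a m) (cpow b m) ≤ cpow (comm a b) n

/-- Pure elements: `t ⊔ a⊥ = ⊤` for every compact `a ≤ t`. -/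
def IsPure (t : C) : Prop := ∀ a : C, IsCompactElement a → a ≤ t → t ⊔ ann a = ⊤

/-- w-pure elements: `t ⊔ (a → ρ(⊥)) = ⊤` for every compact `a ≤ t`. -/
def IsWPure (t : C) : Prop :=
  ∀ a : C, IsCompactElement a → a ≤ t → t ⊔ resid a (radical ⊥) = ⊤

/-- Complemented elements. -/
def IsComplEl (a : C) : Prop := ∃ b : C, a ⊔ b = ⊤ ∧ a ⊓ b = ⊥

/-- Regular elements: joins of sets of complemented elements. -/
def IsRegular (t : C) : Prop := ∃ S : Set C, (∀ a ∈ S, IsComplEl a) ∧ t = sSup S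

/-- Max-regular elements: maximal among regular elements distinct from `⊤`. -/
def IsMaxRegular (t : C) : Prop :=
  IsRegular t ∧ t ≠ ⊤ ∧ ∀ u : C, IsRegular u → u ≠ ⊤ → t ≤ u → u = t

/-- Maximal elements of `C \ {⊤}`. -/
def IsMaximal (p : C) : Prop := p ≠ ⊤ ∧ ∀ q : C, q ≠ ⊤ → p ≤ q → q = p

/-- Minimal primes. -/
def IsMinPrime (p : C) : Prop := IsPrime p ∧ ∀ q : C, IsPrime q → q ≤ p → q = p

variable (C) in
/-- `C` is mp if every prime lies above a unique minimal prime. -/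
def MP : Prop := ∀ p : C, IsPrime p → ∃! q : C, IsMinPrime q ∧ q ≤ p

variable (C) in
/-- `C` is PF if `a⊥` is pure for every compact `a`. -/
def PF : Prop := ∀ a : C, IsCompactElement a → IsPure (ann a)

variable (C) in
/-- `C` is PP if `a⊥` is complemented for every compact `a`. -/
def PP : Prop := ∀ a : C, IsCompactElement a → IsComplEl (ann a)

/-- `O(p) := ⨆ {a compact | a⊥ ≰ p}`. -/
def O (p : C) : C := sSup {a : C | IsCompactElement a ∧ ¬ ann a ≤ p}

variable (C) in
/-- `C` is normal. -/
def Normal : Prop := ∀ t u : C, t ⊔ u = ⊤ →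
  ∃ a b : C, t ⊔ a = ⊤ ∧ u ⊔ b = ⊤ ∧ comm a b = ⊥

variable (C) in
/-- `C` is B-normal. -/
def BNormal : Prop := ∀ t u : C, t ⊔ u = ⊤ →
  ∃ a b : C, IsComplEl a ∧ IsComplEl b ∧ t ⊔ a = ⊤ ∧ u ⊔ b = ⊤ ∧ comm a b = ⊥

variable (C) in
/-- `C` is purified. -/
def Purified : Prop := ∀ p q : C, IsMinPrime p → IsMinPrime q → p ≠ q →
  ∃ a : C, IsComplEl a ∧ a ≤ p ∧ ann a ≤ q

variable (C) in
/-- The prime spectrum of `C`. -/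
abbrev Spec := {p : C // IsPrime p}

variable (C) in
/-- The Zariski topology on `Spec C`: the closed sets are the `V(t) = {p | t ≤ p}`,
equivalently the topology generated by the sets `D(t) = {p | t ≰ p}`. -/
def zariskiTop : TopologicalSpace (Spec C) :=
  TopologicalSpace.generateFrom {U : Set (Spec C) | ∃ t : C, U = {p : Spec C | ¬ t ≤ p.1}}

variable (C) in
/-- The flat topology on `Spec C`: generated by the open basis `V(a)`, `a` compact. -/
def flatTop : TopologicalSpace (Spec C) :=
  TopologicalSpace.generateFrom
    {U : Set (Spec C) | ∃ a : C, IsCompactElement a ∧ U = {p : Spec C | a ≤ p.1}}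

/-!
If `C` is mp and `p` is a minimal prime with `p ⊔ (a → ρ(⊥)) ≠ ⊤` for some compact `a ≤ p`, take a
maximal, hence prime, `m` above it. The elements `s` that are compact and satisfy
`[a, b] ≤ ρ(s)` for some `b ≰ m` form a commutator-closed family containing `a` and every compact
`c ≰ m`, and none of them lies below `⊥`, because `a → ρ(⊥) ≤ m`. A prime maximal among those
avoiding the family lies below `m` but not above `a`; the minimal prime below it differs from `p`,
contradicting uniqueness at `m`.

Conversely, if `y` is a w-pure minimal prime and `q` a prime with `y ⊔ q ≠ ⊤`, a compact `c ≤ y`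
with `c ≰ q` would give `c → ρ(⊥) ≤ q`, so `y ⊔ q = ⊤`. Hence two minimal primes below the same
prime coincide.
-/

instance : IsCompactlyGenerated C := ⟨compactlyGenerated⟩

instance : IsCoatomic C := coatomic_of_top_compact top_isCompact

lemma exists_compact_le_not_le {x y : C} (h : ¬ x ≤ y) :
    ∃ c : C, IsCompactElement c ∧ c ≤ x ∧ ¬ c ≤ y := by
  simpa [le_iff_compact_le_imp (a := x)] using h

lemma comm_sup_left (x y z : C) : comm (x ⊔ y) z = comm x z ⊔ comm y z := by
  rw [← sSup_pair, comm_sSup, iSup_pair]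

lemma comm_sup_right (x y z : C) : comm z (x ⊔ y) = comm z x ⊔ comm z y := by
  rw [comm_comm, comm_sup_left, comm_comm x, comm_comm y]

lemma comm_le_left (a b : C) : comm a b ≤ a := (comm_le_inf a b).trans inf_le_left

lemma comm_le_right (a b : C) : comm a b ≤ b := (comm_le_inf a b).trans inf_le_right

lemma comm_mono_left {x y : C} (z : C) (h : x ≤ y) : comm x z ≤ comm y z := by
  rw [← sup_eq_right.2 h, comm_sup_left]
  exact le_sup_left

lemma comm_mono_right {x y : C} (z : C) (h : x ≤ y) : comm z x ≤ comm z y := by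
  rw [comm_comm z x, comm_comm z y]
  exact comm_mono_left z h

lemma comm_mono {a b c d : C} (hab : a ≤ b) (hcd : c ≤ d) : comm a c ≤ comm b d :=
  (comm_mono_left c hab).trans (comm_mono_right b hcd)

lemma comm_sup_sup_le {a b q : C} (h : comm a b ≤ q) : comm (q ⊔ a) (q ⊔ b) ≤ q := by
  rw [comm_sup_left, comm_sup_right, comm_sup_right]
  exact sup_le (sup_le (comm_le_left _ _) (comm_le_left _ _))
    (sup_le (comm_le_right _ _) h)

lemma comm_resid_le (a b : C) : comm a (resid a b) ≤ b := by
  rw [resid, comm_comm, comm_sSup]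
  exact iSup₂_le fun c hc => (comm_comm c a).trans_le hc

lemma le_resid_iff {a b c : C} : c ≤ resid a b ↔ comm a c ≤ b :=
  ⟨fun h => (comm_mono_right a h).trans (comm_resid_le a b), fun h => _root_.le_sSup h⟩

lemma IsPrime.resid_le {a b q : C} (hq : IsPrime q) (hb : b ≤ q) (ha : ¬ a ≤ q) :
    resid a b ≤ q :=
  (hq.2 _ _ ((comm_resid_le a b).trans hb)).resolve_left ha

lemma isPrime_of_isCoatom {m : C} (hm : IsCoatom m) : IsPrime m := by
  refine ⟨hm.1, fun a b hab => ?_⟩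
  by_contra! h
  have hma : m ⊔ a = ⊤ := hm.2 _ (left_lt_sup.2 h.1)
  have hmb : m ⊔ b = ⊤ := hm.2 _ (left_lt_sup.2 h.2)
  apply hm.1
  rw [eq_top_iff, ← comm_top ⊤]
  simpa only [hma, hmb] using comm_sup_sup_le hab

lemma isPrime_sInf_of_isChain {d : Set C} (hne : d.Nonempty) (hd : IsChain (· ≤ ·) d)
    (hprime : ∀ q ∈ d, IsPrime q) : IsPrime (sInf d) := by
  obtain ⟨q₀, hq₀⟩ := hne
  refine ⟨fun htop => (hprime q₀ hq₀).1 (top_le_iff.1 (htop ▸ sInf_le hq₀)), fun a b hab => ?_⟩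
  by_contra! h
  obtain ⟨q₁, hq₁, ha⟩ := not_forall₂.1 (mt _root_.le_sInf h.1)
  obtain ⟨q₂, hq₂, hb⟩ := not_forall₂.1 (mt _root_.le_sInf h.2)
  rcases hd.total hq₁ hq₂ with h₁₂ | h₂₁
  · rcases (hprime q₁ hq₁).2 a b (hab.trans (sInf_le hq₁)) with h | h
    exacts [ha h, hb (h.trans h₁₂)]
  · rcases (hprime q₂ hq₂).2 a b (hab.trans (sInf_le hq₂)) with h | h
    exacts [ha (h.trans h₂₁), hb h]

lemma exists_isMinPrime_le {p : C} (hp : IsPrime p) : ∃ q : C, IsMinPrime q ∧ q ≤ p := by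
  obtain ⟨q, hqp, ⟨hq, -⟩, hmin⟩ := zorn_le_nonempty₀ (α := Cᵒᵈ)
    {q | IsPrime (OrderDual.ofDual q) ∧ OrderDual.ofDual q ≤ p}
    (fun c hc hchain y hy => ⟨OrderDual.toDual (sInf (OrderDual.ofDual '' c)),
      ⟨isPrime_sInf_of_isChain ⟨_, Set.mem_image_of_mem _ hy⟩
          (hchain.symm.image_of_map_rel _ _ _ fun _ _ h => h)
          (Set.forall_mem_image.2 fun _ hq => (hc hq).1),
        (sInf_le (Set.mem_image_of_mem _ hy)).trans (hc hy).2⟩,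
      fun z hz => sInf_le (Set.mem_image_of_mem _ hz)⟩) (OrderDual.toDual p) ⟨hp, le_rfl⟩
  exact ⟨q, ⟨hq, fun q' hq' hq'q => le_antisymm hq'q (hmin ⟨hq', hq'q.trans hqp⟩ hq'q)⟩, hqp⟩

lemma exists_isPrime_le_forall_not_le {S : Set C} (hS : S.Nonempty)
    (hcompact : ∀ s ∈ S, IsCompactElement s) (hcomm : ∀ s ∈ S, ∀ t ∈ S, comm s t ∈ S)
    {x : C} (hx : ∀ s ∈ S, ¬ s ≤ x) : ∃ q : C, IsPrime q ∧ x ≤ q ∧ ∀ s ∈ S, ¬ s ≤ q := by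
  obtain ⟨q, hxq, hq, hmax⟩ := zorn_le_nonempty₀ {y : C | ∀ s ∈ S, ¬ s ≤ y}
    (fun c hc hchain y hy => ⟨sSup c, fun s hs hle => by
      obtain ⟨z, hz, hsz⟩ := (isCompactElement_iff_le_of_directed_sSup_le C s).1
        (hcompact s hs) c ⟨y, hy⟩ hchain.directedOn hle
      exact hc hz s hs hsz, fun z hz => _root_.le_sSup hz⟩) x hx
  refine ⟨q, ⟨fun htop => ?_, fun a b hab => ?_⟩, hxq, hq⟩
  · obtain ⟨s, hs⟩ := hS
    exact hq s hs (htop ▸ le_top)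
  · have hmeets : ∀ y, ¬ y ≤ q → ∃ s ∈ S, s ≤ q ⊔ y := fun y hy => by
      by_contra! h
      exact hy (le_sup_right.trans (hmax h le_sup_left))
    by_contra! h
    obtain ⟨s, hs, hsa⟩ := hmeets a h.1
    obtain ⟨t, ht, htb⟩ := hmeets b h.2
    exact hq _ (hcomm s hs t ht) ((comm_mono hsa htb).trans (comm_sup_sup_le hab))

lemma le_radical_iff {x s : C} : x ≤ radical s ↔ ∀ q : C, IsPrime q → s ≤ q → x ≤ q :=
  le_sInf_iff.trans ⟨fun h q hq hsq => h q ⟨hq, hsq⟩, fun h q hq => h q hq.1 hq.2⟩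

lemma le_radical (s : C) : s ≤ radical s := le_radical_iff.2 fun _ _ h => h

lemma radical_le_of_le {s q : C} (hq : IsPrime q) (h : s ≤ q) : radical s ≤ q :=
  sInf_le ⟨hq, h⟩

lemma radical_mono {s t : C} (h : s ≤ t) : radical s ≤ radical t :=
  le_radical_iff.2 fun _ hq htq => radical_le_of_le hq (h.trans htq)

lemma radical_comm_eq_inf (s t : C) : radical (comm s t) = radical s ⊓ radical t := by
  refine le_antisymm (le_inf (radical_mono (comm_le_left s t)) (radical_mono (comm_le_right s t)))
    (le_radical_iff.2 fun q hq hst => ?_)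
  rcases hq.2 s t hst with h | h
  exacts [inf_le_left.trans (radical_le_of_le hq h), inf_le_right.trans (radical_le_of_le hq h)]

lemma exists_isPrime_le_not_le_of_resid_le {m a : C} (hm : IsPrime m) (ha : IsCompactElement a)
    (hres : resid a (radical ⊥) ≤ m) : ∃ q : C, IsPrime q ∧ q ≤ m ∧ ¬ a ≤ q := by
  set S : Set C := {s | IsCompactElement s ∧ ∃ b, ¬ b ≤ m ∧ comm a b ≤ radical s}
  have hmemS : ∀ c, IsCompactElement c → ¬ c ≤ m → c ∈ S := fun c hc hcm =>
    ⟨hc, c, hcm, (comm_le_right a c).trans (le_radical c)⟩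
  have haS : a ∈ S := ⟨ha, ⊤, fun h => hm.1 (top_le_iff.1 h), (comm_top a).trans_le (le_radical a)⟩
  have hcomm : ∀ s ∈ S, ∀ t ∈ S, comm s t ∈ S := by
    rintro s ⟨hs, b₁, hb₁, hsb₁⟩ t ⟨ht, b₂, hb₂, htb₂⟩
    refine ⟨comm_isCompact s t hs ht, comm b₁ b₂, fun h => (hm.2 _ _ h).elim hb₁ hb₂, ?_⟩
    rw [radical_comm_eq_inf]
    exact le_inf ((comm_mono_right a (comm_le_left b₁ b₂)).trans hsb₁)
      ((comm_mono_right a (comm_le_right b₁ b₂)).trans htb₂)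
  have hbot : ∀ s ∈ S, ¬ s ≤ ⊥ := by
    rintro s ⟨-, b, hbm, hab⟩ hs
    exact hbm ((le_resid_iff.2 (hab.trans (radical_mono hs))).trans hres)
  obtain ⟨q, hq, -, hqS⟩ :=
    exists_isPrime_le_forall_not_le ⟨a, haS⟩ (fun s hs => hs.1) hcomm hbot
  refine ⟨q, hq, le_iff_compact_le_imp.2 fun c hc hcq => ?_, hqS a haS⟩
  by_contra hcm
  exact hqS c (hmemS c hc hcm) hcq

lemma MP.isWPure_of_isMinPrime (hmp : MP C) {p : C} (hp : IsMinPrime p) : IsWPure p := by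
  intro a ha hap
  by_contra hne
  obtain ⟨m, hm, hle⟩ := (eq_top_or_exists_le_coatom _).resolve_left hne
  have hm' : IsPrime m := isPrime_of_isCoatom hm
  obtain ⟨q, hq, hqm, haq⟩ := exists_isPrime_le_not_le_of_resid_le hm' ha (le_sup_right.trans hle)
  obtain ⟨q', hq', hq'q⟩ := exists_isMinPrime_le hq
  obtain ⟨r, -, huniq⟩ := hmp m hm'
  have hq'p : q' = p :=
    (huniq q' ⟨hq', hq'q.trans hqm⟩).trans (huniq p ⟨hp, le_sup_left.trans hle⟩).symm
  exact haq (hap.trans (hq'p ▸ hq'q))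

lemma IsWPure.le_of_sup_ne_top {y q : C} (hy : IsWPure y) (hq : IsPrime q) (hyq : y ⊔ q ≠ ⊤) :
    y ≤ q := by
  by_contra h
  obtain ⟨c, hc, hcy, hcq⟩ := exists_compact_le_not_le h
  refine hyq (top_le_iff.1 ((hy c hc hcy).symm.trans_le (sup_le_sup_left ?_ y)))
  exact hq.resid_le (radical_le_of_le hq bot_le) hcq

lemma mp_of_forall_isWPure (h : ∀ p : C, IsMinPrime p → IsWPure p) : MP C := by
  intro p hp
  obtain ⟨q, hq, hqp⟩ := exists_isMinPrime_le hp
  refine ⟨q, ⟨hq, hqp⟩, fun y ⟨hy, hyp⟩ => hq.2 y hy.1 ?_⟩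
  exact (h y hy).le_of_sup_ne_top hq.1 fun htop => hp.1 (top_le_iff.1 (htop ▸ sup_le hyp hqp))

theorem statement12 : MP C ↔ ∀ p : C, IsMinPrime p → IsWPure p :=
  ⟨fun hmp _ hp => hmp.isWPure_of_isMinPrime hp, mp_of_forall_isWPure⟩

end CommutatorLattice
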